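/- For density operators ρ and σ on a finite-dimensional Hilbert space, with fidelity F(ρ,σ) = Tr√(√ρ σ √ρ) and trace distance d(ρ,σ) = (1/2)Tr|ρ−σ|, one has 1 − F(ρ,σ) ≤ d(ρ,σ). -/

import Mathlib

open Matrix
open scoped ComplexOrder

variable {ι : Type*} [Fintype ι] [DecidableEq ι]

/-- Square root of a matrix: the positive semidefinite square root when the
matrix is positive semidefinite, and `0` otherwise. -/
noncomputable def msqrt (A : Matrix ι ι ℂ) : Matrix ι ι ℂ :=
  letI := Classical.propDecidable A.PosSemidef
  if h : A.PosSemidef then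
    h.1.eigenvectorUnitary.1 * diagonal ((↑) ∘ Real.sqrt ∘ h.1.eigenvalues) *
      (star h.1.eigenvectorUnitary : Matrix ι ι ℂ)
  else 0

/-- A density operator: positive semidefinite with unit trace. -/
def IsDensity (ρ : Matrix ι ι ℂ) : Prop := ρ.PosSemidef ∧ ρ.trace = 1

/-- Uhlmann fidelity `F(ρ,σ) = Tr √(√ρ σ √ρ)`. -/
noncomputable def fidelity (ρ σ : Matrix ι ι ℂ) : ℝ :=
  (msqrt (msqrt ρ * σ * msqrt ρ)).trace.re

/-- Trace distance `d(ρ,σ) = (1/2) Tr |ρ - σ|`, where `|A| = √(Aᴴ A)`. -/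
noncomputable def traceDist (ρ σ : Matrix ι ι ℂ) : ℝ :=
  (1 / 2) * (msqrt ((ρ - σ)ᴴ * (ρ - σ))).trace.re

/-- Bures distance `D(ρ,σ) = 2√(1 - F(ρ,σ))`. -/
noncomputable def buresDist (ρ σ : Matrix ι ι ℂ) : ℝ :=
  2 * Real.sqrt (1 - fidelity ρ σ)

namespace FvdG


variable {ι : Type*} [Fintype ι] [DecidableEq ι]

noncomputable def fm {S : Matrix ι ι ℂ} (hS : S.IsHermitian) (f : ℝ → ℝ) : Matrix ι ι ℂ :=
  (hS.eigenvectorUnitary : Matrix ι ι ℂ) * diagonal (Complex.ofReal ∘ f ∘ hS.eigenvalues) *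
    star (hS.eigenvectorUnitary : Matrix ι ι ℂ)

variable {S : Matrix ι ι ℂ} (hS : S.IsHermitian)

lemma fm_mul (f g : ℝ → ℝ) : fm hS f * fm hS g = fm hS (fun t => f t * g t) := by
  unfold fm
  rw [mul_assoc, mul_assoc, ← mul_assoc (star _) _, ← mul_assoc (star _),
    UnitaryGroup.star_mul_self, one_mul, ← mul_assoc, ← mul_assoc, mul_assoc _ _ (diagonal _),
    diagonal_mul_diagonal]
  have : (fun i => (Complex.ofReal ∘ f ∘ hS.eigenvalues) i * (Complex.ofReal ∘ g ∘ hS.eigenvalues) i)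
      = Complex.ofReal ∘ (fun t => f t * g t) ∘ hS.eigenvalues := by
    funext i; simp
  rw [this]

lemma fm_add (f g : ℝ → ℝ) : fm hS f + fm hS g = fm hS (fun t => f t + g t) := by
  unfold fm
  rw [← add_mul, ← mul_add, diagonal_add]
  have : (fun i => (Complex.ofReal ∘ f ∘ hS.eigenvalues) i + (Complex.ofReal ∘ g ∘ hS.eigenvalues) i)
      = Complex.ofReal ∘ (fun t => f t + g t) ∘ hS.eigenvalues := by
    funext i; simp
  rw [this]

lemma fm_id : fm hS (fun t => t) = S := by
  unfold fm
  exact hS.spectral_theorem.symm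

lemma fm_trace (f : ℝ → ℝ) :
    (fm hS f).trace = ∑ i, (f (hS.eigenvalues i) : ℂ) := by
  unfold fm
  rw [trace_mul_cycle, UnitaryGroup.star_mul_self, one_mul, trace_diagonal]
  simp

lemma fm_isHermitian (f : ℝ → ℝ) : (fm hS f).IsHermitian := by
  unfold fm
  rw [show star (hS.eigenvectorUnitary : Matrix ι ι ℂ)
      = (hS.eigenvectorUnitary : Matrix ι ι ℂ)ᴴ from rfl]
  apply isHermitian_mul_mul_conjTranspose
  exact isHermitian_diagonal_iff.mpr fun i => by
    simp [_root_.IsSelfAdjoint, Complex.star_def, Complex.conj_ofReal]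

lemma fm_posSemidef (f : ℝ → ℝ) (hf : ∀ t, 0 ≤ f t) : (fm hS f).PosSemidef := by
  unfold fm
  rw [show star (hS.eigenvectorUnitary : Matrix ι ι ℂ)
      = (hS.eigenvectorUnitary : Matrix ι ι ℂ)ᴴ from rfl]
  apply PosSemidef.mul_mul_conjTranspose_same
  refine posSemidef_diagonal_iff.mpr fun i => ?_
  simpa using Complex.zero_le_real.mpr (hf _)

lemma trace_re_nonneg {M : Matrix ι ι ℂ} (hM : M.PosSemidef) : 0 ≤ M.trace.re := by
  rw [← fm_id hM.1, fm_trace]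
  rw [Complex.re_sum]
  exact Finset.sum_nonneg fun i _ => by simpa using hM.eigenvalues_nonneg i

lemma fm_congr {f g : ℝ → ℝ} (h : ∀ i, f (hS.eigenvalues i) = g (hS.eigenvalues i)) :
    fm hS f = fm hS g := by
  unfold fm
  rw [show (Complex.ofReal ∘ f ∘ hS.eigenvalues) = Complex.ofReal ∘ g ∘ hS.eigenvalues from
    funext fun i => by simp [h i]]

lemma fm_cfc (f : ℝ → ℝ) : fm hS f = cfc f S := by
  rw [hS.cfc_eq f]; rfl

lemma msqrt_eq {A : Matrix ι ι ℂ} (h : A.PosSemidef) : msqrt A = fm h.1 Real.sqrt := by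
  simp only [msqrt]
  rw [dif_pos h]
  rfl

lemma msqrt_posSemidef {A : Matrix ι ι ℂ} (h : A.PosSemidef) : (msqrt A).PosSemidef := by
  rw [msqrt_eq h]; exact fm_posSemidef h.1 _ fun t => Real.sqrt_nonneg t

lemma msqrt_mul_self {A : Matrix ι ι ℂ} (h : A.PosSemidef) : msqrt A * msqrt A = A := by
  rw [msqrt_eq h, fm_mul]
  conv_rhs => rw [← fm_id h.1]
  exact fm_congr h.1 fun i => Real.mul_self_sqrt (h.eigenvalues_nonneg i)

lemma trace_mul_re_nonneg {A B : Matrix ι ι ℂ} (hA : A.PosSemidef) (hB : B.PosSemidef) :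
    0 ≤ ((A * B).trace).re := by
  have h1 : A * B = msqrt A * (msqrt A * B) := by rw [← mul_assoc, msqrt_mul_self hA]
  rw [h1, trace_mul_comm]
  have h2 : msqrt A * B * msqrt A = msqrt A * B * (msqrt A)ᴴ := by
    rw [(msqrt_posSemidef hA).1.eq]
  rw [h2]
  exact trace_re_nonneg (hB.mul_mul_conjTranspose_same (msqrt A))

lemma msqrt_fm {A : Matrix ι ι ℂ} (h : A.PosSemidef) : msqrt A = fm h.1 Real.sqrt := by
  exact msqrt_eq h

lemma msqrt_herm_sq {S : Matrix ι ι ℂ} (hS : S.IsHermitian) :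
    msqrt (Sᴴ * S) = fm hS (fun t => |t|) := by
  have habs : fm hS (fun t => |t|) * fm hS (fun t => |t|) = S * S := by
    rw [fm_mul]
    conv_rhs => rw [← fm_id hS]
    rw [fm_mul, show (fun t : ℝ => |t| * |t|) = (fun t : ℝ => t * t) from
      funext fun t => abs_mul_abs_self t]
  have hpsd : (Sᴴ * S).PosSemidef := posSemidef_conjTranspose_mul_self S
  have h2 : (fm hS (fun t => |t|)).PosSemidef := fm_posSemidef hS _ (fun t => abs_nonneg t)
  have e := fm_mul hS (fun t => t) (fun t => t)
  rw [fm_id, fm_cfc] at e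
  rw [msqrt_eq hpsd, fm_cfc, fm_cfc, hS.eq, e,
    ← cfc_comp Real.sqrt (fun t => t * t) S (ha := hS.isSelfAdjoint)]
  congr 1
  funext t
  simp [Real.sqrt_mul_self_eq_abs]

lemma trace_form (A₁ B₁ : ι → ℂ) (P Q : Matrix ι ι ℂ) :
    (diagonal A₁ * P * diagonal B₁ * Q).trace = ∑ i, ∑ k, A₁ i * P i k * B₁ k * Q k i := by
  have e1 : ∀ i k, (diagonal A₁ * P * diagonal B₁) i k = A₁ i * P i k * B₁ k := fun i k => by
    rw [Matrix.mul_diagonal, Matrix.diagonal_mul]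
  simp only [Matrix.trace, Matrix.diag, Matrix.mul_apply, e1]

lemma re_trace_fm_mul_le {S Δ : Matrix ι ι ℂ} (hS : S.IsHermitian) (hΔ : Δ.IsHermitian)
    (s : ℝ → ℝ) (hs : ∀ t, |s t| ≤ 1) :
    ((fm hS s * Δ).trace).re ≤ ∑ i, |hΔ.eigenvalues i| := by
  set U : Matrix ι ι ℂ := (hS.eigenvectorUnitary : Matrix ι ι ℂ) with hU
  set W : Matrix ι ι ℂ := (hΔ.eigenvectorUnitary : Matrix ι ι ℂ) with hW
  set a : ι → ℂ := Complex.ofReal ∘ s ∘ hS.eigenvalues with ha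
  set b : ι → ℂ := Complex.ofReal ∘ hΔ.eigenvalues with hb
  set M : Matrix ι ι ℂ := star U * W with hM
  have hUU : U * star U = 1 := hS.eigenvectorUnitary.2.2
  have hWW : star W * W = 1 := hΔ.eigenvectorUnitary.2.1
  have hMH : Mᴴ = star W * U := by
    rw [← Matrix.star_eq_conjTranspose, hM, StarMul.star_mul, star_star]
  have hcol : ∀ k, ∑ i, Complex.normSq (M i k) = 1 := by
    intro k
    have h1 : star M * M = 1 := by
      have e : star M * M = star W * (U * star U) * W := by
        rw [hM, StarMul.star_mul, star_star]
        noncomm_ring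
      rw [e, hUU, mul_one, hWW]
    have h2 := congrFun (congrFun h1 k) k
    rw [Matrix.mul_apply, Matrix.one_apply_eq] at h2
    have h3 : ∑ i, (Complex.normSq (M i k) : ℂ) = 1 := by
      rw [← h2]
      refine Finset.sum_congr rfl fun i _ => ?_
      rw [Matrix.star_apply, Complex.normSq_eq_conj_mul_self]
      rfl
    rw [← Complex.ofReal_sum] at h3
    exact_mod_cast h3
  have key : (fm hS s * Δ).trace = ∑ i, ∑ k, a i * M i k * b k * Mᴴ k i := by
    conv_lhs => rw [← fm_id hΔ]
    have e : fm hS s * fm hΔ (fun t => t) = U * (diagonal a * M * diagonal b * star W) := by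
      unfold fm
      rw [hM]
      noncomm_ring
    rw [e, trace_mul_comm,
      show diagonal a * M * diagonal b * star W * U = diagonal a * M * diagonal b * Mᴴ from by
        rw [hMH, mul_assoc],
      trace_form]
  have hterm : ∀ i k, a i * M i k * b k * Mᴴ k i
      = ((s (hS.eigenvalues i) * hΔ.eigenvalues k * Complex.normSq (M i k) : ℝ) : ℂ) := by
    intro i k
    rw [conjTranspose_apply,
      show a i * M i k * b k * star (M i k) = a i * b k * (M i k * star (M i k)) from by ring,
      RCLike.star_def, Complex.mul_conj]
    simp only [ha, hb, Function.comp_apply]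
    push_cast
    ring
  have hre : ((fm hS s * Δ).trace).re
      = ∑ i, ∑ k, s (hS.eigenvalues i) * hΔ.eigenvalues k * Complex.normSq (M i k) := by
    rw [key]
    simp only [hterm, Complex.re_sum, Complex.ofReal_re]
  rw [hre]
  calc ∑ i, ∑ k, s (hS.eigenvalues i) * hΔ.eigenvalues k * Complex.normSq (M i k)
      ≤ ∑ i, ∑ k, |hΔ.eigenvalues k| * Complex.normSq (M i k) := by
        refine Finset.sum_le_sum fun i _ => Finset.sum_le_sum fun k _ => ?_
        have hn : 0 ≤ Complex.normSq (M i k) := Complex.normSq_nonneg _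
        have h1 : s (hS.eigenvalues i) * hΔ.eigenvalues k ≤ |hΔ.eigenvalues k| := by
          calc s (hS.eigenvalues i) * hΔ.eigenvalues k
              ≤ |s (hS.eigenvalues i) * hΔ.eigenvalues k| := le_abs_self _
            _ = |s (hS.eigenvalues i)| * |hΔ.eigenvalues k| := abs_mul _ _
            _ ≤ 1 * |hΔ.eigenvalues k| :=
                mul_le_mul_of_nonneg_right (hs _) (abs_nonneg _)
            _ = |hΔ.eigenvalues k| := one_mul _
        exact mul_le_mul_of_nonneg_right h1 hn
    _ = ∑ k, |hΔ.eigenvalues k| * (∑ i, Complex.normSq (M i k)) := by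
        rw [Finset.sum_comm]
        simp [Finset.mul_sum]
    _ = ∑ k, |hΔ.eigenvalues k| := by simp [hcol]

lemma cs_bound {Y : Matrix ι ι ℂ} {v : ι → ℂ} {μ : ℝ}
    (hv : star v ⬝ᵥ v = 1) (hμ : star (Y *ᵥ v) ⬝ᵥ (Y *ᵥ v) = (μ : ℂ)) :
    (star v ⬝ᵥ (Y *ᵥ v)).re ≤ Real.sqrt μ := by
  set x : EuclideanSpace ℂ ι := (WithLp.equiv 2 (ι → ℂ)).symm v with hxd
  set y : EuclideanSpace ℂ ι := (WithLp.equiv 2 (ι → ℂ)).symm (Y *ᵥ v) with hyd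
  have hxy : (inner ℂ x y : ℂ) = star v ⬝ᵥ (Y *ᵥ v) := by
    rw [dotProduct_comm]; rfl
  have hx2 : (inner ℂ x x : ℂ) = 1 := by
    rw [show (inner ℂ x x : ℂ) = star v ⬝ᵥ v by rw [dotProduct_comm]; rfl]; exact hv
  have hy2 : (inner ℂ y y : ℂ) = (μ : ℂ) := by
    rw [show (inner ℂ y y : ℂ) = star (Y *ᵥ v) ⬝ᵥ (Y *ᵥ v) by rw [dotProduct_comm]; rfl]; exact hμ
  have hx1 : ‖x‖ = 1 := by
    have h1 : ‖x‖ ^ 2 = 1 := by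
      have h2 := (inner_self_eq_norm_sq_to_K (𝕜 := ℂ) x).symm.trans hx2
      rw [← RCLike.ofReal_pow] at h2
      simpa using RCLike.ofReal_inj.mp (h2.trans (RCLike.ofReal_one (K := ℂ)).symm)
    nlinarith [norm_nonneg x]
  have hy1 : ‖y‖ ^ 2 = μ := by
    have h2 := (inner_self_eq_norm_sq_to_K (𝕜 := ℂ) y).symm.trans hy2
    rw [← RCLike.ofReal_pow] at h2
    exact RCLike.ofReal_inj.mp h2
  have hsq : Real.sqrt μ = ‖y‖ := by rw [← hy1, Real.sqrt_sq (norm_nonneg _)]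
  calc (star v ⬝ᵥ (Y *ᵥ v)).re = (inner ℂ x y : ℂ).re := by rw [hxy]
    _ ≤ ‖(inner ℂ x y : ℂ)‖ := Complex.re_le_norm _
    _ ≤ ‖x‖ * ‖y‖ := norm_inner_le_norm x y
    _ = Real.sqrt μ := by rw [hx1, one_mul, hsq]

lemma re_trace_le_msqrt (Y : Matrix ι ι ℂ) :
    Y.trace.re ≤ (msqrt (Yᴴ * Y)).trace.re := by
  have hA : (Yᴴ * Y).PosSemidef := posSemidef_conjTranspose_mul_self Y
  set h : (Yᴴ * Y).IsHermitian := hA.1 with hh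
  set U : Matrix ι ι ℂ := (h.eigenvectorUnitary : Matrix ι ι ℂ) with hU
  have hUU : U * star U = 1 := h.eigenvectorUnitary.2.2
  have hsUU : star U * U = 1 := h.eigenvectorUnitary.2.1
  have e2 : ∀ i, (star U * Y * U) i i
      = star (fun k => U k i) ⬝ᵥ (Y *ᵥ fun k => U k i) := by
    intro i
    simp only [Matrix.mul_apply, dotProduct, Matrix.mulVec, Matrix.star_apply, Pi.star_apply,
      Finset.sum_mul, Finset.mul_sum]
    rw [Finset.sum_comm]
    exact Finset.sum_congr rfl fun j _ => Finset.sum_congr rfl fun l _ => by ring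
  have htr : Y.trace = ∑ i, star (fun k => U k i) ⬝ᵥ (Y *ᵥ fun k => U k i) := by
    have e1 : Y.trace = (star U * Y * U).trace := by
      rw [mul_assoc, trace_mul_comm, mul_assoc, hUU, mul_one]
    rw [e1]
    exact Finset.sum_congr rfl fun i _ => e2 i
  have hrhs : (msqrt (Yᴴ * Y)).trace.re = ∑ i, Real.sqrt (h.eigenvalues i) := by
    rw [msqrt_fm hA, fm_trace]
    simp [Complex.re_sum]
  rw [htr, hrhs, Complex.re_sum]
  refine Finset.sum_le_sum fun i _ => ?_
  have hcol : (fun k => U k i) = ⇑(h.eigenvectorBasis i) := funext fun k => rfl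
  have hv : star (fun k => U k i) ⬝ᵥ (fun k => U k i) = 1 := by
    have h2 := congrFun (congrFun hsUU i) i
    rw [Matrix.mul_apply, Matrix.one_apply_eq] at h2
    simpa [dotProduct, Matrix.star_apply, Pi.star_apply] using h2
  have hμ : star (Y *ᵥ fun k => U k i) ⬝ᵥ (Y *ᵥ fun k => U k i)
      = ((h.eigenvalues i : ℝ) : ℂ) := by
    rw [star_mulVec, ← dotProduct_mulVec, mulVec_mulVec, hcol, h.mulVec_eigenvectorBasis]
    rw [dotProduct_smul, ← hcol, hv]
    simp [Complex.real_smul]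
  exact cs_bound hv hμ

lemma fm_mul_left (f : ℝ → ℝ) : fm hS f * S = fm hS (fun t => f t * t) := by
  have h := fm_mul hS f (fun t => t)
  rwa [fm_id hS] at h

lemma fm_mul_right (f : ℝ → ℝ) : S * fm hS f = fm hS (fun t => t * f t) := by
  have h := fm_mul hS (fun t => t) f
  rwa [fm_id hS] at h

lemma fm_sq : S * S = fm hS (fun t => t * t) := by
  have h := fm_mul hS (fun t => t) (fun t => t)
  rwa [fm_id hS] at h

end FvdG

open FvdG in
/-- Lower Fuchs–van de Graaf inequality: for density operators,
`1 - F(ρ,σ) ≤ d(ρ,σ)`. -/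
theorem one_sub_fidelity_le_traceDist {ι : Type*} [Fintype ι] [DecidableEq ι]
    (ρ σ : Matrix ι ι ℂ) (hρ : IsDensity ρ) (hσ : IsDensity σ) :
    1 - fidelity ρ σ ≤ traceDist ρ σ := by
  obtain ⟨hρp, hρt⟩ := hρ
  obtain ⟨hσp, hσt⟩ := hσ
  set R : Matrix ι ι ℂ := msqrt ρ with hRdef
  set G : Matrix ι ι ℂ := msqrt σ with hGdef
  have hR : R.PosSemidef := msqrt_posSemidef hρp
  have hG : G.PosSemidef := msqrt_posSemidef hσp
  have hRR : R * R = ρ := msqrt_mul_self hρp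
  have hGG : G * G = σ := msqrt_mul_self hσp
  have hS : (R - G).IsHermitian := hR.1.sub hG.1
  have hΔ : (ρ - σ).IsHermitian := hρp.1.sub hσp.1
  set lam : ι → ℝ := hS.eigenvalues with hlam
  set x : ℝ := ((R * G).trace).re with hxdef
  -- Step 1 : x ≤ fidelity
  have hfid : x ≤ fidelity ρ σ := by
    have e1 : msqrt ρ * σ * msqrt ρ = (G * R)ᴴ * (G * R) := by
      rw [← hRdef, conjTranspose_mul, hR.1, hG.1, ← hGG]
      noncomm_ring
    have e2 := re_trace_le_msqrt (G * R)
    rw [trace_mul_comm] at e2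
    show x ≤ (msqrt (msqrt ρ * σ * msqrt ρ)).trace.re
    rw [e1]
    exact e2
  -- Step 2 : trace of S²
  have hSS : ((R - G) * (R - G)).trace.re = 2 - 2 * x := by
    have e : (R - G) * (R - G) = ρ + σ - R * G - G * R := by
      rw [← hRR, ← hGG]; noncomm_ring
    rw [e]
    have e' : (ρ + σ - R * G - G * R).trace
        = ρ.trace + σ.trace - (R * G).trace - (G * R).trace := by
      simp [trace_sub, trace_add]
    rw [e', hρt, hσt, trace_mul_comm G R]
    simp only [Complex.sub_re, Complex.add_re, Complex.one_re, hxdef]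
    ring
  -- positive and negative parts
  set posf : ℝ → ℝ := fun t => max t 0 with hposf
  set negf : ℝ → ℝ := fun t => max (-t) 0 with hnegf
  have hposf0 : ∀ t, 0 ≤ posf t := fun t => le_max_right t 0
  have hnegf0 : ∀ t, 0 ≤ negf t := fun t => le_max_right _ 0
  have htr1 : ∀ f : ℝ → ℝ, (fm hS f * (R - G)).trace.re = ∑ i, f (lam i) * lam i := by
    intro f
    rw [fm_mul_left hS f, fm_trace, Complex.re_sum]
    simp [hlam]
  have hpos1 : 0 ≤ (fm hS posf * G).trace.re :=
    trace_mul_re_nonneg (fm_posSemidef hS posf hposf0) hG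
  have hneg1 : 0 ≤ (fm hS negf * R).trace.re :=
    trace_mul_re_nonneg (fm_posSemidef hS negf hnegf0) hR
  have e3 : fm hS posf * (R + G)
      = fm hS posf * (R - G) + (fm hS posf * G + fm hS posf * G) := by noncomm_ring
  have e4 : fm hS negf * (R + G)
      = -(fm hS negf * (R - G)) + (fm hS negf * R + fm hS negf * R) := by noncomm_ring
  have hA1 : (∑ i, posf (lam i) * lam i) ≤ (fm hS posf * (R + G)).trace.re := by
    rw [e3]
    simp only [trace_add, Complex.add_re]
    rw [htr1 posf]
    linarith [hpos1]
  have hA2 : -(∑ i, negf (lam i) * lam i) ≤ (fm hS negf * (R + G)).trace.re := by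
    rw [e4]
    simp only [trace_add, trace_neg, Complex.add_re, Complex.neg_re]
    rw [htr1 negf]
    linarith [hneg1]
  have habs' : fm hS (fun t => |t|) = fm hS posf + fm hS negf := by
    rw [fm_add]
    refine congrArg (fm hS) (funext fun t => ?_)
    rcases le_total 0 t with h | h
    · rw [abs_of_nonneg h, hposf, hnegf]
      simp only []
      rw [max_eq_left h, max_eq_right (neg_nonpos.mpr h), add_zero]
    · rw [abs_of_nonpos h, hposf, hnegf]
      simp only []
      rw [max_eq_right h, max_eq_left (neg_nonneg.mpr h), zero_add]
  have habsT : (fm hS (fun t => |t|) * (R + G)).trace.re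
      = (fm hS posf * (R + G)).trace.re + (fm hS negf * (R + G)).trace.re := by
    rw [habs', add_mul, trace_add, Complex.add_re]
  have hSS2 : ((R - G) * (R - G)).trace.re = ∑ i, lam i * lam i := by
    rw [fm_sq hS, fm_trace, Complex.re_sum]
    simp [hlam]
  have hsum : ((R - G) * (R - G)).trace.re ≤ (fm hS (fun t => |t|) * (R + G)).trace.re := by
    rw [hSS2, habsT]
    calc ∑ i, lam i * lam i
        = (∑ i, posf (lam i) * lam i) + -(∑ i, negf (lam i) * lam i) := by
          rw [← Finset.sum_neg_distrib, ← Finset.sum_add_distrib]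
          refine Finset.sum_congr rfl fun i _ => ?_
          rcases le_total 0 (lam i) with h | h
          · rw [hposf, hnegf]
            simp only []
            rw [max_eq_left h, max_eq_right (neg_nonpos.mpr h)]
            ring
          · rw [hposf, hnegf]
            simp only []
            rw [max_eq_right h, max_eq_left (neg_nonneg.mpr h)]
            ring
      _ ≤ _ := add_le_add hA1 hA2
  -- sign function
  set sgn : ℝ → ℝ := fun t => if t < 0 then -1 else 1 with hsgn
  have hsgn_abs : ∀ t, |sgn t| ≤ 1 := by
    intro t
    by_cases h : t < 0 <;> simp [hsgn, h]
  have hsgnid : fm hS sgn * (R - G) = fm hS (fun t => |t|) := by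
    rw [fm_mul_left hS sgn]
    refine congrArg (fm hS) (funext fun t => ?_)
    by_cases h : t < 0
    · rw [hsgn]; simp only [if_pos h]; rw [abs_of_neg h]; ring
    · rw [hsgn]; simp only [if_neg h]; rw [abs_of_nonneg (not_lt.mp h)]; ring
  have hidsgn : (R - G) * fm hS sgn = fm hS (fun t => |t|) := by
    rw [fm_mul_right hS sgn]
    refine congrArg (fm hS) (funext fun t => ?_)
    by_cases h : t < 0
    · rw [hsgn]; simp only [if_pos h]; rw [abs_of_neg h]; ring
    · rw [hsgn]; simp only [if_neg h]; rw [abs_of_nonneg (not_lt.mp h)]; ring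
  have hVtr : (fm hS sgn * (ρ - σ)).trace = (fm hS (fun t => |t|) * (R + G)).trace := by
    have e6 : (ρ - σ) + (ρ - σ) = (R - G) * (R + G) + (R + G) * (R - G) := by
      rw [← hRR, ← hGG]; noncomm_ring
    have e7 : (fm hS sgn * (ρ - σ)).trace + (fm hS sgn * (ρ - σ)).trace
        = (fm hS (fun t => |t|) * (R + G)).trace
          + (fm hS (fun t => |t|) * (R + G)).trace := by
      rw [← trace_add, ← mul_add, e6, mul_add, trace_add]
      congr 1
      · rw [← mul_assoc, hsgnid]
      · rw [← mul_assoc, trace_mul_cycle, hidsgn]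
    have e8 : (2 : ℂ) * (fm hS sgn * (ρ - σ)).trace
        = 2 * (fm hS (fun t => |t|) * (R + G)).trace := by
      rw [two_mul, two_mul]; exact e7
    exact mul_left_cancel₀ two_ne_zero e8
  have h4 : (fm hS sgn * (ρ - σ)).trace.re ≤ ∑ i, |hΔ.eigenvalues i| :=
    re_trace_fm_mul_le hS hΔ sgn hsgn_abs
  have h5 : (∑ i, |hΔ.eigenvalues i|) = (msqrt ((ρ - σ)ᴴ * (ρ - σ))).trace.re := by
    rw [msqrt_herm_sq hΔ, fm_trace, Complex.re_sum]
    simp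
  have c2 : (fm hS (fun t => |t|) * (R + G)).trace.re = (fm hS sgn * (ρ - σ)).trace.re := by
    rw [hVtr]
  show 1 - fidelity ρ σ ≤ (1/2) * (msqrt ((ρ - σ)ᴴ * (ρ - σ))).trace.re
  linarith [hfid, hSS, hsum, c2, h4, h5.le, h5.ge]
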